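/- arXiv:2111.15377 — 3 statements merged into one kernel-verified Lean document; each statement's English description precedes it below -/
import Mathlib

section
/- Let v_D, v_Q, i_D, i_Q be real diagonal n×n matrices and let D₁ be a real symmetric n×n matrix. Define the 2n×2n block matrices E = [[v_D, v_Q], [-v_Q, v_D]], C = [[i_D, i_Q], [i_Q, -i_D]], F = [[v_Q, v_D], [-v_D, v_Q]], and D_y = [[D₁, 0], [0, D₁]]. Then trace((E·D_y + C)·F) = 0. -/
open Matrix

lemma isDiag_mul_comm {n : ℕ} {A B : Matrix (Fin n) (Fin n) ℝ}
    (hA : A.IsDiag) (hB : B.IsDiag) : A * B = B * A := by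
  ext i j
  simp only [Matrix.mul_apply]
  apply Finset.sum_congr rfl
  intro k _
  by_cases hik : i = k
  · subst hik
    by_cases hkj : i = j
    · subst hkj; ring
    · rw [hA hkj, hB hkj]; ring
  · rw [hA hik, hB hik]; ring

lemma trace_fromBlocks' {n : ℕ} (A B C D : Matrix (Fin n) (Fin n) ℝ) :
    (fromBlocks A B C D).trace = A.trace + D.trace := by
  simp [Matrix.trace, Fintype.sum_sum_type, fromBlocks, Matrix.diag]

theorem trace_modelII_feedthrough_eq_zero (n : ℕ)
    (vD vQ iD iQ D₁ : Matrix (Fin n) (Fin n) ℝ)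
    (hvD : vD.IsDiag) (hvQ : vQ.IsDiag) (hiD : iD.IsDiag) (hiQ : iQ.IsDiag)
    (hD₁ : D₁ᵀ = D₁) :
    ((fromBlocks vD vQ (-vQ) vD * fromBlocks D₁ 0 0 D₁
        + fromBlocks iD iQ iQ (-iD)) * fromBlocks vQ vD (-vD) vQ).trace = 0 := by
  rw [fromBlocks_multiply, fromBlocks_add, fromBlocks_multiply, trace_fromBlocks']
  have h1 : (vD * D₁ * vQ).trace = (vQ * D₁ * vD).trace := by
    rw [trace_mul_comm, ← Matrix.mul_assoc, isDiag_mul_comm hvQ hvD, Matrix.mul_assoc, trace_mul_comm (vQ * D₁) vD]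
  have h2 : (iD * vQ).trace = (vQ * iD).trace := trace_mul_comm _ _
  have h3 : (iQ * vD).trace = (vD * iQ).trace := trace_mul_comm _ _
  simp only [Matrix.mul_zero, Matrix.zero_mul, add_zero, zero_add,
    Matrix.add_mul, Matrix.mul_add, Matrix.neg_mul, Matrix.mul_neg,
    trace_add, trace_neg, Matrix.mul_assoc] at *
  have h4 : (vD * (vQ * D₁)).trace = (vQ * D₁ * vD).trace :=
    (trace_mul_comm (vQ * D₁) vD).symm
  linarith
end

section
/- With E, C, F, D_y as in the Model II construction (v_D, v_Q, i_D, i_Q real diagonal n×n matrices, D₁ real symmetric, E = [[v_D, v_Q], [-v_Q, v_D]], C = [[i_D, i_Q], [i_Q, -i_D]], F = [[v_Q, v_D], [-v_D, v_Q]], D_y = [[D₁,0],[0,D₁]]), if the matrix (E·D_y + C)·F + ((E·D_y + C)·F)ᵀ is positive semidefinite, then it is the zero matrix. -/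
/-! A positive semidefinite matrix of trace zero vanishes, and the trace of the feed-through
matrix `D₂` is already zero because the diagonal matrices `vD` and `vQ` commute. -/

open Matrix

namespace Matrix

variable {m R : Type*} [Fintype m]

theorem trace_fromBlocks [AddCommMonoid R] (A B C D : Matrix m m R) :
    (fromBlocks A B C D).trace = A.trace + D.trace := by
  simp [trace, Fintype.sum_sum_type]

theorem IsDiag.commute [CommSemiring R] [DecidableEq m] {A B : Matrix m m R}
    (hA : A.IsDiag) (hB : B.IsDiag) : Commute A B := by
  rw [← hA.diagonal_diag, ← hB.diagonal_diag]
  exact commute_diagonal _ _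

/-- The `P, Q` block contributes opposite traces to the two diagonal blocks; what is left is
`2 tr(A D B - B D A)`, which vanishes by cyclicity once `A` and `B` commute. -/
theorem trace_feedthrough_eq_zero_of_commute [CommRing R] [DecidableEq m]
    {A B : Matrix m m R} (hAB : Commute A B) (D P Q : Matrix m m R) :
    ((fromBlocks A B (-B) A * fromBlocks D 0 0 D + fromBlocks P Q Q (-P))
      * fromBlocks B A (-A) B).trace = 0 := by
  have hcycle : (A * D * B).trace = (B * D * A).trace := by
    rw [trace_mul_cycle A D B, trace_mul_cycle B D A, hAB.eq]
  simp only [fromBlocks_multiply, fromBlocks_add, trace_fromBlocks, Matrix.mul_zero,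
    add_zero, zero_add, Matrix.neg_mul, Matrix.mul_neg, Matrix.add_mul,
    trace_neg, trace_add]
  linear_combination 2 * hcycle

end Matrix

theorem modelII_feedthrough_symm_part_eq_zero_of_posSemidef_general (n : ℕ)
    (vD vQ iD iQ D₁ : Matrix (Fin n) (Fin n) ℝ)
    (hvD : vD.IsDiag) (hvQ : vQ.IsDiag)
    (D₂ : Matrix (Fin n ⊕ Fin n) (Fin n ⊕ Fin n) ℝ)
    (hD₂ : D₂ = (fromBlocks vD vQ (-vQ) vD * fromBlocks D₁ 0 0 D₁
        + fromBlocks iD iQ iQ (-iD)) * fromBlocks vQ vD (-vD) vQ)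
    (hpsd : (D₂ + D₂ᵀ).PosSemidef) :
    D₂ + D₂ᵀ = 0 := by
  have htrace : D₂.trace = 0 :=
    hD₂ ▸ trace_feedthrough_eq_zero_of_commute (hvD.commute hvQ) D₁ iD iQ
  rw [← hpsd.trace_eq_zero_iff, trace_add, trace_transpose, htrace, add_zero]

theorem modelII_feedthrough_symm_part_eq_zero_of_posSemidef (n : ℕ)
    (vD vQ iD iQ D₁ : Matrix (Fin n) (Fin n) ℝ)
    (hvD : vD.IsDiag) (hvQ : vQ.IsDiag) (hiD : iD.IsDiag) (hiQ : iQ.IsDiag)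
    (hD₁ : D₁ᵀ = D₁)
    (D₂ : Matrix (Fin n ⊕ Fin n) (Fin n ⊕ Fin n) ℝ)
    (hD₂ : D₂ = (fromBlocks vD vQ (-vQ) vD * fromBlocks D₁ 0 0 D₁
        + fromBlocks iD iQ iQ (-iD)) * fromBlocks vQ vD (-vD) vQ)
    (hpsd : (D₂ + D₂ᵀ).PosSemidef) :
    D₂ + D₂ᵀ = 0 :=
  modelII_feedthrough_symm_part_eq_zero_of_posSemidef_general n vD vQ iD iQ D₁ hvD hvQ D₂ hD₂ hpsd
end

section
/- With the notation of the previous statement (τ > 0, D₃ = (E·D_y + C)·F·[[τI,0],[0,I]]), if D₃ + D₃ᵀ is positive semidefinite then Q_j = (v_D)_{jj}(i_Q)_{jj} − (v_Q)_{jj}(i_D)_{jj} = 0 for every j. -/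
/-!
Since `v_D` and `v_Q` are diagonal, the `D₁`-terms of `D₂` contribute
`(v_D D₁ v_Q - v_Q D₁ v_D)_{jj} = 0` to its diagonal, so the `(j, j)` entries of the two diagonal
blocks of `D₂` are `-Q_j` and `Q_j`. Right multiplication by `diag(τ I, I)` scales the first by `τ`,
and the diagonal of `D₃ + D₃ᵀ` is twice that of `D₃`; positive semidefiniteness then gives
`-τ Q_j ≥ 0` and `Q_j ≥ 0`.
-/

open Matrix

theorem Matrix.IsDiag.mul_apply_of_left {m n α : Type*} [Fintype m] [DecidableEq m]
    [NonUnitalNonAssocSemiring α] {A : Matrix m m α} (hA : A.IsDiag) (B : Matrix m n α)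
    (i : m) (j : n) : (A * B) i j = A i i * B i j := by
  rw [← hA.diagonal_diag, diagonal_mul, diagonal_apply_eq, diag_apply]

theorem Matrix.IsDiag.mul_apply_of_right {m n α : Type*} [Fintype n] [DecidableEq n]
    [NonUnitalNonAssocSemiring α] {B : Matrix n n α} (hB : B.IsDiag) (A : Matrix m n α)
    (i : m) (j : n) : (A * B) i j = A i j * B j j := by
  rw [← hB.diagonal_diag, mul_diagonal, diagonal_apply_eq, diag_apply]

theorem Matrix.fromBlocks_smul_one_zero_zero_one {m n α : Type*} [DecidableEq m] [DecidableEq n]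
    [Semiring α] (c : α) :
    fromBlocks (c • 1 : Matrix m m α) 0 0 (1 : Matrix n n α)
      = diagonal (Sum.elim (fun _ => c) 1) := by
  rw [smul_one_eq_diagonal, ← diagonal_one, fromBlocks_diagonal]
  rfl

theorem Matrix.PosSemidef.apply_self_nonneg_of_add_transpose {n R : Type*} [Fintype n]
    [Ring R] [LinearOrder R] [IsOrderedRing R] [StarRing R] {A : Matrix n n R}
    (h : (A + Aᵀ).PosSemidef) (i : n) : 0 ≤ A i i :=
  nonneg_add_self_iff.mp h.diag_nonneg

section NetworkModel

variable {n R : Type*} [Fintype n] [DecidableEq n] [CommRing R]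
  {vD vQ : Matrix n n R} (hvD : vD.IsDiag) (hvQ : vQ.IsDiag) (iD iQ D₁ : Matrix n n R)

def reactivePower (vD vQ iD iQ : Matrix n n R) (j : n) : R :=
  vD j j * iQ j j - vQ j j * iD j j

include hvD hvQ

theorem networkMatrix_apply_inl_inl (j : n) :
    ((fromBlocks vD vQ (-vQ) vD * fromBlocks D₁ 0 0 D₁ + fromBlocks iD iQ iQ (-iD))
      * fromBlocks vQ vD (-vD) vQ) (Sum.inl j) (Sum.inl j) = -reactivePower vD vQ iD iQ j := by
  simp only [fromBlocks_multiply, fromBlocks_add, fromBlocks_apply₁₁, mul_zero, add_zero,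
    mul_neg, add_mul, Matrix.add_apply, Matrix.neg_apply, Matrix.zero_apply,
    hvQ.mul_apply_of_right, hvD.mul_apply_of_right, hvD.mul_apply_of_left,
    hvQ.mul_apply_of_left, reactivePower]
  ring

theorem networkMatrix_apply_inr_inr (j : n) :
    ((fromBlocks vD vQ (-vQ) vD * fromBlocks D₁ 0 0 D₁ + fromBlocks iD iQ iQ (-iD))
      * fromBlocks vQ vD (-vD) vQ) (Sum.inr j) (Sum.inr j) = reactivePower vD vQ iD iQ j := by
  simp only [fromBlocks_multiply, fromBlocks_add, fromBlocks_apply₂₂, mul_zero, zero_add,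
    neg_mul, add_mul, Matrix.add_apply, Matrix.neg_apply, Matrix.zero_apply,
    hvQ.mul_apply_of_right, hvD.mul_apply_of_right, hvD.mul_apply_of_left,
    hvQ.mul_apply_of_left, reactivePower]
  ring

end NetworkModel

theorem modelIII_posSemidef_implies_zero_reactive_power_general (n : ℕ)
    (vD vQ iD iQ D₁ : Matrix (Fin n) (Fin n) ℝ) (τ : ℝ) (hτ : 0 < τ)
    (hvD : vD.IsDiag) (hvQ : vQ.IsDiag)
    (D₂ D₃ : Matrix (Fin n ⊕ Fin n) (Fin n ⊕ Fin n) ℝ)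
    (hD₂ : D₂ = (fromBlocks vD vQ (-vQ) vD * fromBlocks D₁ 0 0 D₁
        + fromBlocks iD iQ iQ (-iD)) * fromBlocks vQ vD (-vD) vQ)
    (hD₃ : D₃ = D₂ * fromBlocks (τ • (1 : Matrix (Fin n) (Fin n) ℝ)) 0 0 1)
    (hpsd : (D₃ + D₃ᵀ).PosSemidef) :
    ∀ j : Fin n, vD j j * iQ j j - vQ j j * iD j j = 0 := by
  intro j
  rw [hD₃, fromBlocks_smul_one_zero_zero_one] at hpsd
  have h₁ := hpsd.apply_self_nonneg_of_add_transpose (Sum.inl j)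
  have h₂ := hpsd.apply_self_nonneg_of_add_transpose (Sum.inr j)
  rw [mul_diagonal, hD₂, networkMatrix_apply_inl_inl hvD hvQ] at h₁
  rw [mul_diagonal, hD₂, networkMatrix_apply_inr_inr hvD hvQ] at h₂
  simp only [Sum.elim_inl, Sum.elim_inr, Pi.one_apply, mul_one] at h₁ h₂
  have hQ_nonpos : reactivePower vD vQ iD iQ j ≤ 0 :=
    neg_nonneg.mp (nonneg_of_mul_nonneg_left h₁ hτ)
  exact le_antisymm hQ_nonpos h₂

theorem modelIII_posSemidef_implies_zero_reactive_power (n : ℕ)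
    (vD vQ iD iQ D₁ : Matrix (Fin n) (Fin n) ℝ) (τ : ℝ) (hτ : 0 < τ)
    (hvD : vD.IsDiag) (hvQ : vQ.IsDiag) (hiD : iD.IsDiag) (hiQ : iQ.IsDiag)
    (hD₁ : D₁ᵀ = D₁)
    (D₂ D₃ : Matrix (Fin n ⊕ Fin n) (Fin n ⊕ Fin n) ℝ)
    (hD₂ : D₂ = (fromBlocks vD vQ (-vQ) vD * fromBlocks D₁ 0 0 D₁
        + fromBlocks iD iQ iQ (-iD)) * fromBlocks vQ vD (-vD) vQ)
    (hD₃ : D₃ = D₂ * fromBlocks (τ • (1 : Matrix (Fin n) (Fin n) ℝ)) 0 0 1)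
    (hpsd : (D₃ + D₃ᵀ).PosSemidef) :
    ∀ j : Fin n, vD j j * iQ j j - vQ j j * iD j j = 0 :=
  modelIII_posSemidef_implies_zero_reactive_power_general n vD vQ iD iQ D₁ τ hτ hvD hvQ D₂ D₃ hD₂
    hD₃ hpsd
end
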